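/- arXiv:1512.01792 — 2 statements merged into one kernel-verified Lean document; each statement's English description precedes it below -/
import Mathlib

section
/- Let F₁ and F₂ be probability distributions on [0,∞) whose convolution F₁*F₂ belongs to the class L(γ) for some γ ≥ 0 (i.e., for all t, the tail satisfies (1-(F₁*F₂))(x-t) ~ e^{γt}(1-(F₁*F₂))(x) as x → ∞). Assume that for i = 1,2 and all t > 0, liminf_{x→∞} F̄ᵢ(x-t)/F̄ᵢ(x) ≥ e^{γt}. Then for i = 1,2 and all t > 0, |F̄ᵢ(x-t) - e^{γt} F̄ᵢ(x)| = o((1-(F₁*F₂))(x)) as x → ∞. -/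
open MeasureTheory Filter Set Asymptotics

/-- The tail `F̄(x) = μ((x,∞))` of a distribution `μ` on `ℝ`. -/
noncomputable def tail (μ : MeasureTheory.Measure ℝ) (x : ℝ) : ℝ := (μ (Set.Ioi x)).toReal

/-- Convolution of two distributions on `ℝ`. -/
noncomputable def mconv (μ ν : MeasureTheory.Measure ℝ) : MeasureTheory.Measure ℝ :=
  MeasureTheory.Measure.map (fun p : ℝ × ℝ => p.1 + p.2) (μ.prod ν)

/-- `iconv μ k` is the `k`-fold convolution `μ^{*k}` (with `μ^{*0} = δ₀`). -/
noncomputable def iconv (μ : MeasureTheory.Measure ℝ) : ℕ → MeasureTheory.Measure ℝ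
  | 0 => MeasureTheory.Measure.dirac 0
  | n + 1 => mconv (iconv μ n) μ

/-- The class `L(γ)`: `F̄(x-t) ~ e^{γt} F̄(x)` as `x → ∞`, for every `t`. -/
def MemL (γ : ℝ) (μ : MeasureTheory.Measure ℝ) : Prop :=
  ∀ t : ℝ, Filter.Tendsto (fun x => tail μ (x - t) / tail μ x) Filter.atTop
    (nhds (Real.exp (γ * t)))

/-- The class `OS`: `limsup_{x→∞} (F*F)̄(x) / F̄(x) < ∞`. -/
def MemOS (μ : MeasureTheory.Measure ℝ) : Prop :=
  Filter.IsBoundedUnder (· ≤ ·) Filter.atTop (fun x => tail (mconv μ μ) x / tail μ x)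

/-!
Write `H = F * G` and split the half-plane `{u + v > z}` behind `H̄(z)` at a corner `(X - t, x - X)`
into the strip `u < X - t`, the strip `v ≤ x - X` (with a window `v ∈ [a, a + w]` of positive
`G`-mass set aside) and the remaining quadrant. Slicing along `u`, resp. `v`, the liminf hypothesis
for `G`, resp. `F`, shows that the strips contribute nonnegatively to
`H̄(x - t) - (e^{γt} - ε) H̄(x)`, the window contributes at least
`G[a, a + w] (F̄(x - a - t) - e^{γt} F̄(x - a - w))`, and the quadrant costs at most `e^{γt} - 1`
times its mass. Choosing `X` by pigeonhole among `K` disjoint windows, and using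
`H̄(x + T) ≲ e^{-γT} H̄(x)`, the quadrant mass is small compared with `H̄(x)`, while `H ∈ L(γ)`
gives `H̄(x - t) - (e^{γt} - ε) H̄(x) ≤ 2ε H̄(x)` eventually. Run with the shift `t + w` and read
at `y = x - a - w`, this bounds `F̄(y - t) - e^{γ(t + w)} F̄(y)` by `o(H̄(y))`, and `w → 0` gives
the upper bound. The lower bound is the liminf hypothesis together with `F̄ ≤ H̄`.
-/

open Topology

theorem tail_nonneg (μ : Measure ℝ) (x : ℝ) : 0 ≤ tail μ x := measureReal_nonneg

section Tail

variable {μ : Measure ℝ}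

theorem tail_antitone [IsFiniteMeasure μ] : Antitone (tail μ) := fun _ _ h =>
  measureReal_mono (Ioi_subset_Ioi h)

theorem MemL.tail_pos [IsFiniteMeasure μ] {γ : ℝ} (hL : MemL γ μ) (x : ℝ) : 0 < tail μ x := by
  refine (tail_nonneg μ x).lt_of_ne fun hx => (Real.exp_pos (γ * 1)).ne' ?_
  refine tendsto_nhds_unique (hL 1) (tendsto_const_nhds.congr' ?_)
  filter_upwards [eventually_ge_atTop (x + 1)] with z hz
  have : tail μ (z - 1) = 0 :=
    le_antisymm (hx ▸ tail_antitone (by linarith)) (tail_nonneg μ _)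
  simp [this]

theorem MemL.eventually_tail_sub_le [IsFiniteMeasure μ] {γ : ℝ} (hL : MemL γ μ) {r : ℝ} (s : ℝ)
    (hr : Real.exp (γ * s) < r) : ∀ᶠ x in atTop, tail μ (x - s) ≤ r * tail μ x := by
  filter_upwards [(hL s).eventually_lt_const hr] with x hx
  exact ((div_lt_iff₀ (hL.tail_pos x)).mp hx).le

theorem eventually_mul_tail_le_of_lt_liminf {t r : ℝ}
    (h : r < liminf (fun x => tail μ (x - t) / tail μ x) atTop) :
    ∀ᶠ x in atTop, r * tail μ x ≤ tail μ (x - t) := by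
  have hbdd : IsBoundedUnder (· ≥ ·) atTop fun x => tail μ (x - t) / tail μ x :=
    isBoundedUnder_of_eventually_ge (a := 0)
      (Eventually.of_forall fun x => div_nonneg (tail_nonneg μ _) (tail_nonneg μ _))
  filter_upwards [eventually_lt_of_lt_liminf h hbdd] with x hx
  rcases (tail_nonneg μ x).eq_or_lt with h0 | hpos
  · simp [← h0, tail_nonneg]
  · exact ((lt_div_iff₀ hpos).mp hx).le

end Tail

def halfPlane (z : ℝ) : Set (ℝ × ℝ) := {p | z < p.1 + p.2}

theorem measurableSet_halfPlane (z : ℝ) : MeasurableSet (halfPlane z) :=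
  measurableSet_lt measurable_const (measurable_fst.add measurable_snd)

section Convolution

variable {F G : Measure ℝ}

instance isFiniteMeasure_mconv [IsFiniteMeasure F] [IsFiniteMeasure G] :
    IsFiniteMeasure (mconv F G) :=
  Measure.isFiniteMeasure_map _ _

theorem mconv_comm [SFinite F] [SFinite G] : mconv F G = mconv G F := by
  rw [mconv, mconv, ← Measure.prod_swap, Measure.map_map (by fun_prop) measurable_swap]
  simp only [Function.comp_def, Prod.fst_swap, Prod.snd_swap, add_comm]

theorem tail_mconv (z : ℝ) : tail (mconv F G) z = (F.prod G).real (halfPlane z) := by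
  rw [tail, mconv, Measure.map_apply (by fun_prop) measurableSet_Ioi]
  rfl

theorem tail_le_tail_mconv [IsFiniteMeasure F] [IsProbabilityMeasure G] (hG : G (Iio 0) = 0)
    (z : ℝ) : tail F z ≤ tail (mconv F G) z := by
  have hG1 : G.real (Ici 0) = 1 := by
    rw [← compl_Iio, probReal_compl_eq_one_sub measurableSet_Iio, measureReal_def, hG]
    simp
  calc tail F z = (F.prod G).real (Ioi z ×ˢ Ici 0) := by
        rw [measureReal_prod_prod, hG1, mul_one]; rfl
    _ ≤ tail (mconv F G) z := by
        rw [tail_mconv]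
        exact measureReal_mono fun p ⟨hu, hv⟩ => by
          simp only [mem_Ioi, mem_Ici] at hu hv; show z < _; linarith

theorem prod_halfPlane_inter_snd [SFinite F] [SFinite G] {S : Set ℝ} (hS : MeasurableSet S)
    (z : ℝ) : (F.prod G) (halfPlane z ∩ Prod.snd ⁻¹' S) = ∫⁻ v in S, F (Ioi (z - v)) ∂G := by
  rw [Measure.prod_apply_symm ((measurableSet_halfPlane z).inter (measurable_snd hS)),
    ← lintegral_indicator hS]
  congr 1 with v
  by_cases hv : v ∈ S
  · simp only [indicator_of_mem hv]
    congr 1 with u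
    simp [halfPlane, hv, sub_lt_iff_lt_add]
  · simp [hv, preimage_preimage]

theorem prod_halfPlane_inter_fst [SFinite F] [SFinite G] {S : Set ℝ} (hS : MeasurableSet S)
    (z : ℝ) :
    (F.prod G) (halfPlane z ∩ Prod.fst ⁻¹' S) = (G.prod F) (halfPlane z ∩ Prod.snd ⁻¹' S) := by
  rw [← Measure.prod_swap, Measure.map_apply measurable_swap
    ((measurableSet_halfPlane z).inter (measurable_fst hS))]
  congr 1 with p
  simp [halfPlane, add_comm]

end Convolution

-- Since `p + r ≤ z`, a point of the half-plane with `v ≤ r` has `u > p`: the three pieces are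
-- disjoint.
theorem measureReal_halfPlane_eq_add (μ : Measure (ℝ × ℝ)) [IsFiniteMeasure μ] {p r z : ℝ}
    (h : p + r ≤ z) :
    μ.real (halfPlane z) = μ.real (halfPlane z ∩ Prod.fst ⁻¹' Iio p) +
      μ.real (halfPlane z ∩ Prod.snd ⁻¹' Iic r) + μ.real (halfPlane z ∩ Ici p ×ˢ Ioi r) := by
  have hbulk : (halfPlane z \ Prod.fst ⁻¹' Iio p) ∩ Prod.snd ⁻¹' Iic r =
      halfPlane z ∩ Prod.snd ⁻¹' Iic r := by
    ext ⟨u, v⟩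
    simp only [halfPlane, mem_inter_iff, Set.mem_sdiff, mem_preimage, mem_ofPred_eq, mem_Iio,
      mem_Iic, not_lt]
    constructor
    · exact fun ⟨⟨hz, _⟩, hv⟩ => ⟨hz, hv⟩
    · exact fun ⟨hz, hv⟩ => ⟨⟨hz, by linarith⟩, hv⟩
  have hcorner : (halfPlane z \ Prod.fst ⁻¹' Iio p) \ Prod.snd ⁻¹' Iic r =
      halfPlane z ∩ Ici p ×ˢ Ioi r := by
    ext ⟨u, v⟩
    simp [halfPlane, and_assoc]
  rw [← measureReal_inter_add_sdiff (s := halfPlane z) (measurable_fst measurableSet_Iio),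
    ← measureReal_inter_add_sdiff (s := halfPlane z \ Prod.fst ⁻¹' Iio p)
      (measurable_snd measurableSet_Iic), hbulk, hcorner, add_assoc]

theorem exists_measureReal_le_div {α ι : Type*} [MeasurableSpace α] (μ : Measure α)
    [IsFiniteMeasure μ] {s : Finset ι} (hs : s.Nonempty) {f : ι → Set α} {t : Set α}
    (hd : (s : Set ι).PairwiseDisjoint f) (hm : ∀ i ∈ s, MeasurableSet (f i))
    (ht : ∀ i ∈ s, f i ⊆ t) : ∃ i ∈ s, μ.real (f i) ≤ μ.real t / s.card := by
  apply Finset.exists_le_of_sum_le hs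
  rw [Finset.sum_const, nsmul_eq_mul, mul_div_cancel₀ _ (by simp [hs.ne_empty]),
    ← measureReal_biUnion_finset hd hm]
  exact measureReal_mono (iUnion₂_subset ht)

theorem exists_pos_measureReal_Icc {G : Measure ℝ} [IsProbabilityMeasure G] (hG : G (Iio 0) = 0)
    {w : ℝ} (hw : 0 < w) : ∃ a, 0 ≤ a ∧ 0 < G.real (Icc a (a + w)) := by
  by_contra! h
  have hnull (n : ℕ) : G (Icc (n * w) (n * w + w)) = 0 :=
    (measureReal_eq_zero_iff).mp (le_antisymm (h _ (by positivity)) measureReal_nonneg)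
  have hcover : Ici 0 ⊆ ⋃ n : ℕ, Icc (n * w) (n * w + w) := fun y (hy : 0 ≤ y) =>
    mem_iUnion.mpr ⟨⌊y / w⌋₊, (le_div_iff₀ hw).mp (Nat.floor_le (by positivity)), by
      have := (div_lt_iff₀ hw).mp (Nat.lt_floor_add_one (y / w)); linarith⟩
  have hone : G (Ici 0) = 1 := by
    rw [← compl_Iio, prob_compl_eq_one_sub measurableSet_Iio, hG, tsub_zero]
  simpa [hone] using measure_mono_null hcover (measure_iUnion_null hnull)

section Estimates

variable {F G : Measure ℝ} [IsFiniteMeasure F] [IsFiniteMeasure G]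

theorem mul_measureReal_halfPlane_inter_snd_le {S : Set ℝ} (hS : MeasurableSet S) {c x y : ℝ}
    (h : ∀ v ∈ S, c * tail F (x - v) ≤ tail F (y - v)) :
    c * (F.prod G).real (halfPlane x ∩ Prod.snd ⁻¹' S) ≤
      (F.prod G).real (halfPlane y ∩ Prod.snd ⁻¹' S) := by
  rcases le_or_gt c 0 with hc | hc
  · exact (mul_nonpos_of_nonpos_of_nonneg hc measureReal_nonneg).trans measureReal_nonneg
  have hmeas : Measurable fun v => F (Ioi (y - v)) :=
    Monotone.measurable fun _ _ h => measure_mono (Ioi_subset_Ioi (by linarith))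
  rw [measureReal_def, measureReal_def, prod_halfPlane_inter_snd hS,
    ← ENNReal.toReal_ofReal hc.le, ← ENNReal.toReal_mul,
    ← lintegral_const_mul' _ _ ENNReal.ofReal_ne_top]
  refine ENNReal.toReal_mono (measure_ne_top _ _) ?_
  rw [prod_halfPlane_inter_snd hS]
  refine setLIntegral_mono hmeas fun v hv => ?_
  rw [← ENNReal.ofReal_toReal (measure_ne_top F (Ioi (x - v))),
    ← ENNReal.ofReal_toReal (measure_ne_top F (Ioi (y - v))), ← ENNReal.ofReal_mul hc.le]
  exact ENNReal.ofReal_le_ofReal (h v hv)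

theorem measureReal_Icc_mul_sub_le {t x X a w c : ℝ} (ht : 0 ≤ t) (hc : 0 ≤ c)
    (haw : a + w ≤ x - X)
    (hF : ∀ v ≤ x - X, c * tail F (x - v) ≤ tail F (x - t - v))
    (hG : ∀ u < X - t, c * tail G (x - u) ≤ tail G (x - t - u)) :
    G.real (Icc a (a + w)) * (tail F (x - a - t) - c * tail F (x - a - w)) ≤
      tail (mconv F G) (x - t) - c * tail (mconv F G) x +
        (c - 1) * (F.real (Ici (X - t)) * G.real (Ioi (x - X))) := by
  set P := F.prod G
  set A := Icc a (a + w)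
  have hsplit (z : ℝ) : P.real (halfPlane z ∩ Prod.snd ⁻¹' Iic (x - X)) =
      P.real (halfPlane z ∩ Prod.snd ⁻¹' (Iic (x - X) \ A)) +
        P.real (halfPlane z ∩ Prod.snd ⁻¹' A) := by
    have hA : A ⊆ Iic (x - X) := fun v hv => hv.2.trans haw
    rw [← measureReal_inter_add_sdiff (s := halfPlane z ∩ Prod.snd ⁻¹' Iic (x - X))
      (t := Prod.snd ⁻¹' A) (measurable_snd measurableSet_Icc), add_comm, inter_assoc,
      ← preimage_inter, inter_eq_right.mpr hA, inter_sdiff_assoc, ← preimage_sdiff]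
  have hswap (z : ℝ) : P.real (halfPlane z ∩ Prod.fst ⁻¹' Iio (X - t)) =
      (G.prod F).real (halfPlane z ∩ Prod.snd ⁻¹' Iio (X - t)) := by
    rw [measureReal_def, measureReal_def, prod_halfPlane_inter_fst measurableSet_Iio]
  have hbulk := mul_measureReal_halfPlane_inter_snd_le (G := G) (S := Iic (x - X) \ A)
    (x := x) (y := x - t) (measurableSet_Iic.diff measurableSet_Icc) fun v hv => hF v hv.1
  have hstrip := mul_measureReal_halfPlane_inter_snd_le (G := F) (x := x) (y := x - t)
    measurableSet_Iio hG
  have hcapture :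
      tail F (x - a - t) * G.real A ≤ P.real (halfPlane (x - t) ∩ Prod.snd ⁻¹' A) := by
    rw [tail, ← measureReal_def, ← measureReal_prod_prod]
    refine measureReal_mono fun p ⟨hu, hv⟩ => ⟨?_, hv⟩
    simp only [mem_Ioi, mem_Icc, A] at hu hv
    show x - t < _; linarith
  have hescape : P.real (halfPlane x ∩ Prod.snd ⁻¹' A) ≤ tail F (x - a - w) * G.real A := by
    rw [tail, ← measureReal_def, ← measureReal_prod_prod]
    refine measureReal_mono fun p ⟨hz, hv⟩ => ⟨?_, hv⟩
    simp only [halfPlane, mem_ofPred_eq, mem_preimage, mem_Icc, A] at hz hv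
    show x - a - w < p.1; linarith
  have hcorner : P.real (halfPlane (x - t) ∩ Ici (X - t) ×ˢ Ioi (x - X)) =
      F.real (Ici (X - t)) * G.real (Ioi (x - X)) := by
    rw [inter_eq_right.mpr, measureReal_prod_prod]
    rintro p ⟨hu, hv⟩
    simp only [mem_Ici, mem_Ioi] at hu hv
    show x - t < _; linarith
  have hcorner' : P.real (halfPlane x ∩ Ici (X - t) ×ˢ Ioi (x - X)) ≤
      F.real (Ici (X - t)) * G.real (Ioi (x - X)) :=
    (measureReal_mono inter_subset_right).trans_eq (measureReal_prod_prod _ _)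
  have hHx := measureReal_halfPlane_eq_add P (p := X - t) (r := x - X) (z := x) (by linarith)
  have hHxt := measureReal_halfPlane_eq_add P (p := X - t) (r := x - X) (z := x - t) (by linarith)
  rw [hsplit] at hHx hHxt
  rw [hswap] at hHx hHxt
  rw [tail_mconv, tail_mconv, hHx, hHxt]
  nlinarith [mul_le_mul_of_nonneg_left hescape hc, mul_le_mul_of_nonneg_left hcorner' hc]

theorem measureReal_Ici_mul_le (t x X T : ℝ) :
    F.real (Ici (X - t)) * G.real (Ioi (x - X)) ≤
      F.real (Ico (X - t) (X + T)) * G.real (Ioi (x - X)) + tail (mconv F G) (x + T) := by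
  have hsplit : F.real (Ici (X - t)) ≤ F.real (Ico (X - t) (X + T)) + F.real (Ici (X + T)) := by
    refine (measureReal_mono fun u (hu : X - t ≤ u) => ?_).trans (measureReal_union_le _ _)
    rcases lt_or_ge u (X + T) with h | h
    exacts [Or.inl ⟨hu, h⟩, Or.inr h]
  have hfar : F.real (Ici (X + T)) * G.real (Ioi (x - X)) ≤ tail (mconv F G) (x + T) := by
    rw [← measureReal_prod_prod, tail_mconv]
    refine measureReal_mono fun p ⟨hu, hv⟩ => ?_
    simp only [mem_Ici, mem_Ioi] at hu hv
    show x + T < p.1 + p.2; linarith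
  nlinarith [mul_le_mul_of_nonneg_right hsplit (measureReal_nonneg (μ := G) (s := Ioi (x - X)))]

theorem exists_measureReal_Ico_mul_le (t x X₀ T : ℝ) (hTt : 0 ≤ T + t) {K : ℕ} (hK : 0 < K) :
    ∃ k < K, F.real (Ico (X₀ + k * (T + t) - t) (X₀ + k * (T + t) + T)) *
      G.real (Ioi (x - (X₀ + k * (T + t)))) ≤ tail (mconv F G) (x - t) / K := by
  set X : ℕ → ℝ := fun k => X₀ + k * (T + t)
  have hgap {i j : ℕ} (h : i < j) : X i + T ≤ X j - t := by
    have : (i : ℝ) + 1 ≤ j := by exact_mod_cast h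
    simp only [X]; nlinarith
  have hdisj : (Finset.range K : Set ℕ).PairwiseDisjoint
      fun k => Ico (X k - t) (X k + T) ×ˢ Ioi (x - X k) := by
    intro i _ j _ hij
    refine disjoint_prod.mpr (Or.inl (Ico_disjoint_Ico.mpr ?_))
    rcases hij.lt_or_gt with h | h
    · exact (min_le_left _ _).trans ((hgap h).trans (le_max_right _ _))
    · exact (min_le_right _ _).trans ((hgap h).trans (le_max_left _ _))
  obtain ⟨k, hk, hle⟩ := exists_measureReal_le_div (F.prod G) (Finset.nonempty_range_iff.mpr
    hK.ne') hdisj (fun k _ => measurableSet_Ico.prod measurableSet_Ioi) (t := halfPlane (x - t))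
    fun k _ p ⟨hu, hv⟩ => by
      simp only [mem_Ico, mem_Ioi] at hu hv
      show x - t < p.1 + p.2; linarith
  rw [measureReal_prod_prod, Finset.card_range, ← tail_mconv] at hle
  exact ⟨k, Finset.mem_range.mp hk, hle⟩

theorem eventually_measureReal_Icc_mul_sub_le {e ε η t T a w : ℝ} {K : ℕ} (he : 1 ≤ e)
    (hε : 0 ≤ ε) (hεe : ε ≤ e) (ht : 0 ≤ t) (hT : 0 ≤ T) (hK : 0 < K)
    (hF : ∀ᶠ z in atTop, (e - ε) * tail F z ≤ tail F (z - t))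
    (hG : ∀ᶠ z in atTop, (e - ε) * tail G z ≤ tail G (z - t))
    (hHt : ∀ᶠ x in atTop, tail (mconv F G) (x - t) ≤ (e + ε) * tail (mconv F G) x)
    (hHT : ∀ᶠ x in atTop, tail (mconv F G) (x + T) ≤ η * tail (mconv F G) x) :
    ∀ᶠ x in atTop, G.real (Icc a (a + w)) * (tail F (x - a - t) - e * tail F (x - a - w)) ≤
      (2 * ε + (e - 1) * ((e + ε) / K + η)) * tail (mconv F G) x := by
  obtain ⟨X₀, hX₀⟩ := eventually_atTop.mp (hF.and hG)
  filter_upwards [hHt, hHT, eventually_ge_atTop (X₀ + K * (T + t) + max X₀ (a + w))]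
    with x hHt hHT hx
  obtain ⟨k, hk, hwindow⟩ := exists_measureReal_Ico_mul_le (F := F) (G := G) t x X₀ T
    (by linarith) hK
  set X := X₀ + k * (T + t)
  have hkK : (k : ℝ) + 1 ≤ K := by exact_mod_cast hk
  have hX₀X : X₀ ≤ X := by simp only [X]; nlinarith
  have hxX : max X₀ (a + w) ≤ x - X := by simp only [X]; nlinarith
  have hcapture := measureReal_Icc_mul_sub_le (F := F) (G := G) (X := X) (a := a) (w := w)
    ht (sub_nonneg.mpr hεe) ((le_max_right _ _).trans hxX)
    (fun v hv => by
      simpa [sub_sub, add_comm] using (hX₀ (x - v) (by linarith)).1)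
    (fun u hu => by
      simpa [sub_sub, add_comm] using
        (hX₀ (x - u) (by linarith [le_max_left X₀ (a + w)])).2)
  set H := tail (mconv F G)
  set M := F.real (Ici (X - t)) * G.real (Ioi (x - X))
  have hM : M ≤ ((e + ε) / K + η) * H x := by
    have hKpos : (0 : ℝ) < K := by exact_mod_cast hK
    calc M ≤ H (x - t) / K + H (x + T) :=
          (measureReal_Ici_mul_le t x X T).trans (add_le_add_left hwindow _)
      _ ≤ (e + ε) * H x / K + η * H x := by gcongr
      _ = ((e + ε) / K + η) * H x := by ring
  have hM0 : 0 ≤ M := mul_nonneg measureReal_nonneg measureReal_nonneg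
  calc G.real (Icc a (a + w)) * (tail F (x - a - t) - e * tail F (x - a - w))
      ≤ G.real (Icc a (a + w)) * (tail F (x - a - t) - (e - ε) * tail F (x - a - w)) :=
        mul_le_mul_of_nonneg_left (by nlinarith [tail_nonneg F (x - a - w)]) measureReal_nonneg
    _ ≤ H (x - t) - (e - ε) * H x + (e - ε - 1) * M := hcapture
    _ ≤ (e + ε) * H x - (e - ε) * H x + (e - 1) * (((e + ε) / K + η) * H x) := by
        nlinarith [mul_le_mul_of_nonneg_left hM (sub_nonneg.mpr he)]
    _ = (2 * ε + (e - 1) * ((e + ε) / K + η)) * H x := by ring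

end Estimates

-- The coefficient of `eventually_measureReal_Icc_mul_sub_le` for `ε = 1 / (n + 1)`, `K = n + 1`,
-- `T = n` and `η = 2 e^{-γT}`.
theorem exists_nat_coeff_lt {γ : ℝ} (hγ : 0 ≤ γ) (s : ℝ) {c : ℝ} (hc : 0 < c) :
    ∃ n : ℕ, 2 * (1 / (n + 1)) + (Real.exp (γ * s) - 1) *
      ((Real.exp (γ * s) + 1 / (n + 1)) / (n + 1) + 2 * Real.exp (γ * -n)) < c := by
  set e := Real.exp (γ * s)
  have hε : Tendsto (fun n : ℕ => 1 / ((n : ℝ) + 1)) atTop (𝓝 0) :=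
    tendsto_one_div_add_atTop_nhds_zero_nat
  have hη : Tendsto (fun n : ℕ => (e - 1) * Real.exp (γ * -n)) atTop (𝓝 0) := by
    rcases hγ.eq_or_lt with rfl | hγ
    · simp [e]
    · simpa using tendsto_const_nhds.mul (Real.tendsto_exp_atBot.comp
        (tendsto_neg_atTop_atBot.comp (tendsto_natCast_atTop_atTop.const_mul_atTop hγ)))
  have hlim := ((hε.const_mul 2).add (((hε.const_add e).const_mul (e - 1)).mul hε)).add
    (hη.const_mul 2)
  simp only [mul_zero, add_zero] at hlim
  obtain ⟨n, hn⟩ := (hlim.eventually (gt_mem_nhds hc)).exists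
  exact ⟨n, lt_of_eq_of_lt (by ring) hn⟩

section Main

variable {F G : Measure ℝ} [IsFiniteMeasure F] [IsProbabilityMeasure G] {γ : ℝ}

theorem eventually_tail_sub_exp_mul_le (hG0 : G (Iio 0) = 0) (hγ : 0 ≤ γ) (hL : MemL γ (mconv F G))
    (hlimF : ∀ t > (0 : ℝ),
      Real.exp (γ * t) ≤ liminf (fun x => tail F (x - t) / tail F x) atTop)
    (hlimG : ∀ t > (0 : ℝ),
      Real.exp (γ * t) ≤ liminf (fun x => tail G (x - t) / tail G x) atTop)
    {t w δ : ℝ} (ht : 0 < t) (hw : 0 < w) (hδ : 0 < δ) :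
    ∀ᶠ y in atTop, tail F (y - t) - Real.exp (γ * (t + w)) * tail F y ≤
      δ * tail (mconv F G) y := by
  obtain ⟨a, ha, hq⟩ := exists_pos_measureReal_Icc hG0 hw
  set e := Real.exp (γ * (t + w))
  have he : 1 ≤ e := Real.one_le_exp (mul_nonneg hγ (by linarith))
  obtain ⟨n, hn⟩ := exists_nat_coeff_lt hγ (t + w) (mul_pos hq hδ)
  set ε : ℝ := 1 / (n + 1)
  have hε : 0 < ε := by positivity
  have hε1 : ε ≤ 1 := div_le_one_of_le₀ (by linarith [n.cast_nonneg (α := ℝ)]) (by positivity)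
  have hF := eventually_mul_tail_le_of_lt_liminf
    ((sub_lt_self e hε).trans_le (hlimF (t + w) (by linarith)))
  have hG := eventually_mul_tail_le_of_lt_liminf
    ((sub_lt_self e hε).trans_le (hlimG (t + w) (by linarith)))
  have hHT := hL.eventually_tail_sub_le (-n) (r := 2 * Real.exp (γ * -n))
    (by linarith [Real.exp_pos (γ * -n)])
  simp only [sub_neg_eq_add] at hHT
  have hcapture := eventually_measureReal_Icc_mul_sub_le (K := n + 1) (a := a) (w := w) he hε.le
    (hε1.trans he) (by linarith) n.cast_nonneg n.succ_pos hF hG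
    (hL.eventually_tail_sub_le (t + w) (lt_add_of_pos_right e hε)) hHT
  filter_upwards [(tendsto_atTop_add_const_right _ (a + w) tendsto_id).eventually hcapture]
    with y hy
  simp only [id] at hy
  rw [show y + (a + w) - a - (t + w) = y - t by ring, show y + (a + w) - a - w = y by ring]
    at hy
  push_cast at hy
  refine le_of_mul_le_mul_left (hy.trans ?_) hq
  calc _ ≤ (G.real (Icc a (a + w)) * δ) * tail (mconv F G) (y + (a + w)) :=
        mul_le_mul_of_nonneg_right hn.le (tail_nonneg _ _)
    _ ≤ (G.real (Icc a (a + w)) * δ) * tail (mconv F G) y :=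
        mul_le_mul_of_nonneg_left (tail_antitone (by linarith)) (by positivity)
    _ = _ := by ring

theorem isLittleO_abs_tail_sub_mul_tail (hG0 : G (Iio 0) = 0) (hγ : 0 ≤ γ)
    (hL : MemL γ (mconv F G))
    (hlimF : ∀ t > (0 : ℝ),
      Real.exp (γ * t) ≤ liminf (fun x => tail F (x - t) / tail F x) atTop)
    (hlimG : ∀ t > (0 : ℝ),
      Real.exp (γ * t) ≤ liminf (fun x => tail G (x - t) / tail G x) atTop)
    {t : ℝ} (ht : 0 < t) :
    (fun x => |tail F (x - t) - Real.exp (γ * t) * tail F x|) =o[atTop]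
      fun x => tail (mconv F G) x := by
  refine isLittleO_iff.mpr fun c hc => ?_
  have hcont : Tendsto (fun w => Real.exp (γ * (t + w))) (𝓝[>] 0) (𝓝 (Real.exp (γ * t))) := by
    have : Continuous fun w => Real.exp (γ * (t + w)) := by fun_prop
    simpa using (this.tendsto 0).mono_left nhdsWithin_le_nhds
  obtain ⟨w, hwc, hw⟩ := ((hcont.eventually_le_const (lt_add_of_pos_right _ (half_pos hc))).and
    self_mem_nhdsWithin).exists
  filter_upwards [eventually_tail_sub_exp_mul_le hG0 hγ hL hlimF hlimG ht hw (half_pos hc),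
    eventually_mul_tail_le_of_lt_liminf ((sub_lt_self _ hc).trans_le (hlimF t ht))]
    with y hupper hlower
  have hFH := tail_le_tail_mconv (F := F) hG0 y
  rw [Real.norm_eq_abs, Real.norm_eq_abs, abs_abs, abs_of_nonneg (tail_nonneg _ _), abs_le]
  constructor
  · nlinarith [mul_le_mul_of_nonneg_left hFH hc.le]
  · nlinarith [mul_le_mul_of_nonneg_right hwc (tail_nonneg F y),
      mul_le_mul_of_nonneg_left hFH (half_pos hc).le]

end Main

theorem stmt0 (F₁ F₂ : Measure ℝ) [IsProbabilityMeasure F₁] [IsProbabilityMeasure F₂]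
    (hs₁ : F₁ (Set.Iio 0) = 0) (hs₂ : F₂ (Set.Iio 0) = 0)
    (γ : ℝ) (hγ : 0 ≤ γ) (hL : MemL γ (mconv F₁ F₂))
    (hlim₁ : ∀ t > (0 : ℝ),
      Real.exp (γ * t) ≤ Filter.liminf (fun x => tail F₁ (x - t) / tail F₁ x) Filter.atTop)
    (hlim₂ : ∀ t > (0 : ℝ),
      Real.exp (γ * t) ≤ Filter.liminf (fun x => tail F₂ (x - t) / tail F₂ x) Filter.atTop) :
    ∀ t > (0 : ℝ),
      ((fun x => |tail F₁ (x - t) - Real.exp (γ * t) * tail F₁ x|) =o[Filter.atTop]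
        fun x => tail (mconv F₁ F₂) x) ∧
      ((fun x => |tail F₂ (x - t) - Real.exp (γ * t) * tail F₂ x|) =o[Filter.atTop]
        fun x => tail (mconv F₁ F₂) x) := by
  intro t ht
  refine ⟨isLittleO_abs_tail_sub_mul_tail hs₂ hγ hL hlim₁ hlim₂ ht, ?_⟩
  rw [mconv_comm] at hL ⊢
  exact isLittleO_abs_tail_sub_mul_tail hs₁ hγ hL hlim₂ hlim₁ ht
end

section
/- Let F be a distribution on [0,∞) satisfying F̄(x) = o((F^{*2})̄(x)) as x → ∞. Then for every integer k ≥ 1, (F^{*k})̄(x) = o((F^{*(k+1)})̄(x)) as x → ∞. -/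
/-!
If `F(M, ∞) = 0`, then `F^{*k}(kM, ∞) = 0`, so all the tails vanish eventually. Otherwise, write
`A = F^{*k}`, `B = A ∗ F` and `C = B ∗ F = A ∗ (F ∗ F)`, fix `ε > 0` and choose `x₀` with
`F̄ ≤ ε (F ∗ F)̄` on `[x₀, ∞)`. Splitting `B̄(x) = ∫ F̄(x - s) dA(s)` at `s = x - x₀`, the part
`s ≤ x - x₀` is at most `ε ∫ (F ∗ F)̄(x - s) dA(s) = ε C̄(x)`, and the part `s > x - x₀` is at most
`Ā(x - x₀) = o(B̄(x - x₀))`, while `B̄(x - x₀) F̄(x₀) ≤ C̄(x)`.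
-/

open MeasureTheory Filter Set Asymptotics

open ENNReal

-- `mconv` is `Measure.conv` unfolded, so Mathlib's API for `∗` applies to `iconv`.
lemma iconv_succ (μ : Measure ℝ) (n : ℕ) : iconv μ (n + 1) = iconv μ n ∗ μ := rfl

lemma iconv_one (μ : Measure ℝ) [SFinite μ] : iconv μ 1 = μ := by
  rw [iconv_succ, iconv, Measure.dirac_zero_conv]

lemma iconv_two (μ : Measure ℝ) [SFinite μ] : iconv μ 2 = μ ∗ μ := by
  rw [iconv_succ, iconv_one]

instance isProbabilityMeasure_iconv (μ : Measure ℝ) [IsProbabilityMeasure μ] (n : ℕ) :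
    IsProbabilityMeasure (iconv μ n) := by
  induction n with
  | zero => rw [iconv]; infer_instance
  | succ n ih => rw [iconv_succ]; infer_instance

lemma measurable_measure_Ioi_sub (ν : Measure ℝ) (x : ℝ) :
    Measurable fun s : ℝ => ν (Ioi (x - s)) :=
  Monotone.measurable fun _ _ hab => measure_mono (Ioi_subset_Ioi (by linarith))

lemma conv_apply_Ioi (μ ν : Measure ℝ) [SFinite μ] [SFinite ν] (x : ℝ) :
    (μ ∗ ν) (Ioi x) = ∫⁻ a, ν (Ioi (x - a)) ∂μ := by
  rw [Measure.conv, Measure.map_apply measurable_add measurableSet_Ioi,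
    Measure.prod_apply (measurable_add measurableSet_Ioi)]
  congr! with a
  ext b
  simp [sub_lt_iff_lt_add']

lemma conv_apply_Ioi' (μ ν : Measure ℝ) [SFinite μ] [SFinite ν] (x : ℝ) :
    (μ ∗ ν) (Ioi x) = ∫⁻ b, μ (Ioi (x - b)) ∂ν := by
  rw [Measure.conv_comm, conv_apply_Ioi]

lemma conv_apply_Ioi_add_eq_zero {μ ν : Measure ℝ} [SFinite ν] {a b : ℝ}
    (hμ : μ (Ioi a) = 0) (hν : ν (Ioi b) = 0) : (μ ∗ ν) (Ioi (a + b)) = 0 := by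
  rw [Measure.conv, Measure.map_apply measurable_add measurableSet_Ioi]
  refine measure_mono_null (t := Ioi a ×ˢ univ ∪ univ ×ˢ Ioi b) ?_ <|
    measure_union_null (by simp [Measure.prod_prod, hμ]) (by simp [Measure.prod_prod, hν])
  intro p (hp : a + b < p.1 + p.2)
  by_contra! hp'
  simp only [mem_union, mem_prod, mem_Ioi, mem_univ, and_true, true_and, not_or, not_lt] at hp'
  linarith [hp'.1, hp'.2]

lemma iconv_apply_Ioi_nat_mul_eq_zero {μ : Measure ℝ} [SFinite μ] {M : ℝ} (hM : μ (Ioi M) = 0)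
    (n : ℕ) : iconv μ n (Ioi (n * M)) = 0 := by
  induction n with
  | zero => simp [iconv]
  | succ n ih =>
    rw [iconv_succ, Nat.cast_succ, add_one_mul]
    exact conv_apply_Ioi_add_eq_zero ih hM

lemma isLittleO_tail_iff (μ ν : Measure ℝ) [IsFiniteMeasure μ] [IsFiniteMeasure ν] :
    tail μ =o[atTop] tail ν ↔
      ∀ c : ℝ, 0 < c → ∀ᶠ x in atTop, μ (Ioi x) ≤ ENNReal.ofReal c * ν (Ioi x) := by
  rw [isLittleO_iff]
  refine forall₂_congr fun c hc => eventually_congr (Eventually.of_forall fun x => ?_)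
  rw [tail, tail, Real.norm_of_nonneg toReal_nonneg, Real.norm_of_nonneg toReal_nonneg, Iff.comm,
    ← toReal_le_toReal (measure_ne_top μ (Ioi x)) (mul_ne_top ofReal_ne_top (measure_ne_top ν _)),
    toReal_mul, toReal_ofReal hc.le]

section ConvTail

variable {A F : Measure ℝ}

lemma conv_apply_Ioi_le [SFinite A] [IsProbabilityMeasure F] (x x₀ : ℝ) :
    (A ∗ F) (Ioi x) ≤ ∫⁻ s in Iic (x - x₀), F (Ioi (x - s)) ∂A + A (Ioi (x - x₀)) := by
  rw [conv_apply_Ioi, ← lintegral_add_compl _ measurableSet_Iic, compl_Iic]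
  gcongr
  calc ∫⁻ s in Ioi (x - x₀), F (Ioi (x - s)) ∂A
      ≤ ∫⁻ _ in Ioi (x - x₀), 1 ∂A := setLIntegral_mono' measurableSet_Ioi fun _ _ => prob_le_one
    _ = A (Ioi (x - x₀)) := by rw [setLIntegral_const, one_mul]

lemma setLIntegral_Iic_le_conv_conv [SFinite A] [SFinite F] {ε : ℝ≥0∞} {x₀ : ℝ}
    (hF : ∀ y, x₀ ≤ y → F (Ioi y) ≤ ε * (F ∗ F) (Ioi y)) (x : ℝ) :
    ∫⁻ s in Iic (x - x₀), F (Ioi (x - s)) ∂A ≤ ε * ((A ∗ F) ∗ F) (Ioi x) :=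
  calc ∫⁻ s in Iic (x - x₀), F (Ioi (x - s)) ∂A
      ≤ ∫⁻ s in Iic (x - x₀), ε * (F ∗ F) (Ioi (x - s)) ∂A :=
        setLIntegral_mono' measurableSet_Iic fun _ hs => hF _ (by linarith [mem_Iic.1 hs])
    _ ≤ ∫⁻ s, ε * (F ∗ F) (Ioi (x - s)) ∂A := setLIntegral_le_lintegral _ _
    _ = ε * ((A ∗ F) ∗ F) (Ioi x) := by
      rw [lintegral_const_mul _ (measurable_measure_Ioi_sub _ x), Measure.conv_assoc,
        conv_apply_Ioi]

lemma measure_Ioi_sub_mul_le_conv [SFinite A] [SFinite F] (x x₀ : ℝ) :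
    A (Ioi (x - x₀)) * F (Ioi x₀) ≤ (A ∗ F) (Ioi x) :=
  calc A (Ioi (x - x₀)) * F (Ioi x₀)
      = ∫⁻ _ in Ioi x₀, A (Ioi (x - x₀)) ∂F := by rw [setLIntegral_const]
    _ ≤ ∫⁻ t in Ioi x₀, A (Ioi (x - t)) ∂F :=
        setLIntegral_mono' measurableSet_Ioi fun _ ht =>
          measure_mono (Ioi_subset_Ioi (by linarith [mem_Ioi.1 ht]))
    _ ≤ ∫⁻ t, A (Ioi (x - t)) ∂F := setLIntegral_le_lintegral _ _
    _ = (A ∗ F) (Ioi x) := (conv_apply_Ioi' _ _ _).symm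

theorem isLittleO_tail_conv_conv [IsFiniteMeasure A] [IsProbabilityMeasure F]
    (hF : ∀ M, F (Ioi M) ≠ 0) (hFF : tail F =o[atTop] tail (F ∗ F))
    (hA : tail A =o[atTop] tail (A ∗ F)) : tail (A ∗ F) =o[atTop] tail ((A ∗ F) ∗ F) := by
  rw [isLittleO_tail_iff] at hFF hA ⊢
  intro c hc
  obtain ⟨x₀, hx₀⟩ := (hFF (c / 2) (half_pos hc)).exists_forall_of_atTop
  set K := F (Ioi x₀)
  have hK : 0 < K.toReal := toReal_pos (hF x₀) (measure_ne_top _ _)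
  obtain ⟨x₁, hx₁⟩ := (hA (c / 2 * K.toReal) (by positivity)).exists_forall_of_atTop
  filter_upwards [eventually_ge_atTop (x₀ + x₁)] with x hx
  have hfar : A (Ioi (x - x₀)) ≤ ENNReal.ofReal (c / 2) * ((A ∗ F) ∗ F) (Ioi x) :=
    calc A (Ioi (x - x₀))
        ≤ ENNReal.ofReal (c / 2 * K.toReal) * (A ∗ F) (Ioi (x - x₀)) := hx₁ _ (by linarith)
      _ = ENNReal.ofReal (c / 2) * ((A ∗ F) (Ioi (x - x₀)) * K) := by
        rw [ofReal_mul (by positivity), ofReal_toReal (measure_ne_top _ _), mul_assoc,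
          mul_comm K]
      _ ≤ ENNReal.ofReal (c / 2) * ((A ∗ F) ∗ F) (Ioi x) := by
        gcongr; exact measure_Ioi_sub_mul_le_conv x x₀
  calc (A ∗ F) (Ioi x)
      ≤ ∫⁻ s in Iic (x - x₀), F (Ioi (x - s)) ∂A + A (Ioi (x - x₀)) := conv_apply_Ioi_le x x₀
    _ ≤ ENNReal.ofReal (c / 2) * ((A ∗ F) ∗ F) (Ioi x)
          + ENNReal.ofReal (c / 2) * ((A ∗ F) ∗ F) (Ioi x) :=
        add_le_add (setLIntegral_Iic_le_conv_conv hx₀ x) hfar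
    _ = ENNReal.ofReal c * ((A ∗ F) ∗ F) (Ioi x) := by
        rw [← add_mul, ← ofReal_add (half_pos hc).le (half_pos hc).le, add_halves]

end ConvTail

theorem stmt3_general (F : Measure ℝ) [IsProbabilityMeasure F]
    (h : (fun x => tail F x) =o[Filter.atTop] fun x => tail (iconv F 2) x) :
    ∀ k : ℕ, 1 ≤ k →
      (fun x => tail (iconv F k) x) =o[Filter.atTop] fun x => tail (iconv F (k + 1)) x := by
  intro k hk
  by_cases hbdd : ∃ M, F (Ioi M) = 0
  · obtain ⟨M, hM⟩ := hbdd
    refine EventuallyEq.trans_isLittleO ?_ (isLittleO_zero _ _)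
    filter_upwards [eventually_ge_atTop ((k : ℝ) * M)] with x hx
    rw [tail, measure_mono_null (Ioi_subset_Ioi hx) (iconv_apply_Ioi_nat_mul_eq_zero hM k),
      toReal_zero]
  · simp only [not_exists] at hbdd
    rw [iconv_two] at h
    induction k, hk using Nat.le_induction with
    | base => rwa [iconv_one, iconv_succ, iconv_one]
    | succ k _ ih => exact isLittleO_tail_conv_conv hbdd h ih

theorem stmt3 (F : Measure ℝ) [IsProbabilityMeasure F] (hs : F (Set.Iio 0) = 0)
    (h : (fun x => tail F x) =o[Filter.atTop] fun x => tail (iconv F 2) x) :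
    ∀ k : ℕ, 1 ≤ k →
      (fun x => tail (iconv F k) x) =o[Filter.atTop] fun x => tail (iconv F (k + 1)) x :=
  stmt3_general F h
end
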